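/- Let Δ > δ ≥ 1 be integers and let G be a finite simple graph with minimum degree at least δ and maximum degree at most Δ. Then R(G) = (√(δ·Δ)/(δ+Δ))·|G| holds if and only if G is (δ,Δ)-biregular, where R(G) = ∑_{uv ∈ E(G)} (d(u)·d(v))^{-1/2}. -/

import Mathlib

/-!
Write `c = √(δΔ)/(δ+Δ)`. For every edge `uv`, substituting squares shows
`(d(u) d(v))^{-1/2} - c (1/d(u) + 1/d(v))` factors as
`(√(Δ d(v)) - √(δ d(u))) (√(Δ d(u)) - √(δ d(v)))` over a positive denominator; both factors are
nonnegative when the degrees lie in `[δ, Δ]`, and the product vanishes exactly when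
`{d(u), d(v)} = {δ, Δ}`. Summing `1/d(u) + 1/d(v)` over the edges counts every vertex once,
so `c |G|` is a sum of edgewise lower bounds for `R(G)`, attained iff every edge joins a
vertex of degree `δ` to one of degree `Δ`; as `δ ≥ 1`, every vertex lies on an edge.
-/

open Finset Set

section EdgeInequality

variable {a b s t : ℝ}

lemma rpow_neg_half_sub_mul_inv_add_inv (ha : 0 < a) (hb : 0 < b) (hs : 0 < s) (ht : 0 < t) :
    (s * t) ^ (-(1 / 2) : ℝ) - √(a * b) / (a + b) * (s⁻¹ + t⁻¹) =
      (√(b * t) - √(a * s)) * (√(b * s) - √(a * t)) / ((a + b) * (s * t)) := by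
  obtain ⟨p, hp, rfl⟩ : ∃ p, 0 < p ∧ a = p ^ 2 := ⟨√a, by positivity, (Real.sq_sqrt ha.le).symm⟩
  obtain ⟨q, hq, rfl⟩ : ∃ q, 0 < q ∧ b = q ^ 2 := ⟨√b, by positivity, (Real.sq_sqrt hb.le).symm⟩
  obtain ⟨x, hx, rfl⟩ : ∃ x, 0 < x ∧ s = x ^ 2 := ⟨√s, by positivity, (Real.sq_sqrt hs.le).symm⟩
  obtain ⟨y, hy, rfl⟩ : ∃ y, 0 < y ∧ t = y ^ 2 := ⟨√t, by positivity, (Real.sq_sqrt ht.le).symm⟩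
  have hsqrt : ∀ m n : ℝ, 0 < m → 0 < n → √(m ^ 2 * n ^ 2) = m * n := fun m n hm hn => by
    rw [← mul_pow, Real.sqrt_sq (by positivity)]
  rw [Real.rpow_neg (by positivity), ← Real.sqrt_eq_rpow, hsqrt x y hx hy, hsqrt p q hp hq,
    hsqrt q y hq hy, hsqrt p x hp hx, hsqrt q x hq hx, hsqrt p y hp hy]
  field_simp
  ring

lemma sqrt_mul_le_sqrt_mul (ha : 0 < a) (hs : s ∈ Icc a b) (ht : t ∈ Icc a b) :
    √(a * s) ≤ √(b * t) :=
  Real.sqrt_le_sqrt (by nlinarith [hs.1, hs.2, ht.1, ht.2])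

lemma sqrt_mul_eq_sqrt_mul_iff (ha : 0 < a) (hs : s ∈ Icc a b) (ht : t ∈ Icc a b) :
    √(b * t) = √(a * s) ↔ s = b ∧ t = a := by
  obtain ⟨has, hsb⟩ := hs
  obtain ⟨hat, htb⟩ := ht
  rw [Real.sqrt_inj (by nlinarith) (by nlinarith)]
  constructor
  · intro h
    constructor <;> nlinarith
  · rintro ⟨rfl, rfl⟩
    ring

theorem randic_edge_le (ha : 0 < a) (hs : s ∈ Icc a b) (ht : t ∈ Icc a b) :
    √(a * b) / (a + b) * (s⁻¹ + t⁻¹) ≤ (s * t) ^ (-(1 / 2) : ℝ) := by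
  have hs₀ := ha.trans_le hs.1
  have ht₀ := ha.trans_le ht.1
  have hb := hs₀.trans_le hs.2
  rw [← sub_nonneg, rpow_neg_half_sub_mul_inv_add_inv ha hb hs₀ ht₀]
  exact div_nonneg (mul_nonneg (sub_nonneg.2 (sqrt_mul_le_sqrt_mul ha hs ht))
    (sub_nonneg.2 (sqrt_mul_le_sqrt_mul ha ht hs))) (by positivity)

theorem randic_edge_eq_iff (ha : 0 < a) (hs : s ∈ Icc a b) (ht : t ∈ Icc a b) :
    (s * t) ^ (-(1 / 2) : ℝ) = √(a * b) / (a + b) * (s⁻¹ + t⁻¹) ↔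
      (s = a ∧ t = b) ∨ (s = b ∧ t = a) := by
  have hs₀ := ha.trans_le hs.1
  have ht₀ := ha.trans_le ht.1
  have hb := hs₀.trans_le hs.2
  rw [← sub_eq_zero, rpow_neg_half_sub_mul_inv_add_inv ha hb hs₀ ht₀,
    div_eq_zero_iff, or_iff_left (by positivity), mul_eq_zero, sub_eq_zero, sub_eq_zero,
    sqrt_mul_eq_sqrt_mul_iff ha hs ht, sqrt_mul_eq_sqrt_mul_iff ha ht hs, or_comm, and_comm]

end EdgeInequality

namespace SimpleGraph

variable {V : Type*} [Fintype V] [DecidableEq V] (G : SimpleGraph V) [DecidableRel G.Adj]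
  {M : Type*} [AddCommMonoid M]

theorem sum_darts_fst (f : V → M) : ∑ d : G.Dart, f d.fst = ∑ v, G.degree v • f v := by
  rw [← sum_fiberwise univ fun d : G.Dart => d.fst]
  refine sum_congr rfl fun v _ => ?_
  rw [sum_congr rfl fun d hd => congrArg f (mem_filter.1 hd).2, sum_const,
    dart_fst_fiber_card_eq_degree]

theorem sum_darts_fst_eq_sum_edgeFinset (f : V → M) :
    ∑ d : G.Dart, f d.fst =
      ∑ e ∈ G.edgeFinset, Sym2.lift ⟨fun u v => f u + f v, fun _ _ => add_comm _ _⟩ e := by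
  rw [← sum_fiberwise_of_maps_to (g := Dart.edge) fun d _ => mem_edgeFinset.2 d.edge_mem]
  refine sum_congr rfl fun e he => ?_
  induction e using Sym2.ind with
  | h u v =>
    let d : G.Dart := ⟨(u, v), mem_edgeFinset.1 he⟩
    rw [show ({d' : G.Dart | d'.edge = s(u, v)} : Finset _) = {d, d.symm} from d.edge_fiber,
      sum_pair d.symm_ne.symm]
    rfl

theorem sum_edgeFinset_lift_add (f : V → M) :
    ∑ e ∈ G.edgeFinset, Sym2.lift ⟨fun u v => f u + f v, fun _ _ => add_comm _ _⟩ e =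
      ∑ v, G.degree v • f v := by
  rw [← sum_darts_fst_eq_sum_edgeFinset, sum_darts_fst]

theorem sum_edgeFinset_inv_degree_add_inv_degree {K : Type*}
    [DivisionSemiring K] [CharZero K] (hG : ∀ v, G.degree v ≠ 0) :
    ∑ e ∈ G.edgeFinset,
        Sym2.lift ⟨fun u v => ((G.degree u : K)⁻¹ + (G.degree v : K)⁻¹),
          fun _ _ => add_comm _ _⟩ e = Fintype.card V := by
  rw [sum_edgeFinset_lift_add, ← card_univ, card_eq_sum_ones, Nat.cast_sum]
  exact sum_congr rfl fun v _ => by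
    rw [nsmul_eq_mul, mul_inv_cancel₀ (Nat.cast_ne_zero.2 (hG v)), Nat.cast_one]

end SimpleGraph

/-- **Theorem (equality case of the O–Shi bound).**
For integers `Δ > δ ≥ 1` and a graph `G` with degrees in `[δ, Δ]`, the Randić index
satisfies `R(G) = (√(δ·Δ)/(δ+Δ))·|G|` if and only if `G` is `(δ,Δ)`-biregular. -/
theorem randic_index_eq_iff_biregular {V : Type*} [Fintype V] [DecidableEq V]
    (G : SimpleGraph V) [DecidableRel G.Adj]
    (δ Δ : ℕ) (hδ : 1 ≤ δ)
    (hmindeg : ∀ v : V, δ ≤ G.degree v) (hmaxdeg : ∀ v : V, G.degree v ≤ Δ) :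
    (∑ e ∈ G.edgeFinset,
        Sym2.lift ⟨fun u v => ((G.degree u : ℝ) * (G.degree v : ℝ)) ^ (-(1 / 2) : ℝ),
          fun u v => by simp [mul_comm]⟩ e =
      Real.sqrt ((δ : ℝ) * Δ) / ((δ : ℝ) + Δ) * Fintype.card V) ↔
    ((∀ v : V, G.degree v = δ ∨ G.degree v = Δ) ∧
      (∀ u v : V, G.Adj u v →
        (G.degree u = δ ∧ G.degree v = Δ) ∨ (G.degree u = Δ ∧ G.degree v = δ))) := by
  have hpos : ∀ v, 0 < G.degree v := fun v => hδ.trans (hmindeg v)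
  have hδ₀ : (0 : ℝ) < δ := by exact_mod_cast hδ
  have hIcc : ∀ v, (G.degree v : ℝ) ∈ Icc (δ : ℝ) Δ := fun v =>
    ⟨by exact_mod_cast hmindeg v, by exact_mod_cast hmaxdeg v⟩
  have hedge : ∀ u v, _ ↔ _ := fun u v => randic_edge_eq_iff hδ₀ (hIcc u) (hIcc v)
  simp only [Nat.cast_inj] at hedge
  rw [← G.sum_edgeFinset_inv_degree_add_inv_degree (K := ℝ) fun v => (hpos v).ne', mul_sum,
    eq_comm, sum_eq_sum_iff_of_le fun e _ => ?bound]
  case bound =>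
    induction e using Sym2.ind with
    | h u v => exact randic_edge_le hδ₀ (hIcc u) (hIcc v)
  constructor
  · intro h
    have hadj : ∀ u v, G.Adj u v → _ := fun u v huv =>
      (hedge u v).1 (h s(u, v) (G.mem_edgeFinset.2 huv)).symm
    refine ⟨fun v => ?_, hadj⟩
    obtain ⟨w, hw⟩ := G.degree_pos_iff_exists_adj v |>.1 (hpos v)
    exact (hadj v w hw).imp And.left And.left
  · rintro ⟨-, hadj⟩ e he
    induction e using Sym2.ind with
    | h u v => exact ((hedge u v).2 (hadj u v (G.mem_edgeFinset.1 he))).symm
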